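/- Let I = {1,…,κ} with κ ≥ 2, and for each i ∈ I let A_i ∈ ℝ^{2×2} be invertible with ‖A_i‖ < 1. Suppose there exist θ ∈ S¹ and 0 < β < π/2 such that A_i(cl X(θ,β)) ⊂ X(θ,β) and A_iᵀ(cl X(θ,β)) ⊂ X(θ,β) for every i ∈ I. Then for every finite word 𝚒 and every x ∈ X(θ,β), |A_𝚒 x| ≥ cos(β)·α₁(A_𝚒)·|x|. -/

import Mathlib

open MeasureTheory Filter Matrix Real Set

noncomputable section

abbrev E2 := EuclideanSpace ℝ (Fin 2)

noncomputable def mLin (A : Matrix (Fin 2) (Fin 2) ℝ) : E2 →L[ℝ] E2 :=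
  LinearMap.toContinuousLinearMap (Matrix.toEuclideanLin A)

/-- largest singular value = operator norm -/
noncomputable def a1 (A : Matrix (Fin 2) (Fin 2) ℝ) : ℝ := ‖mLin A‖

/-- smallest singular value -/
noncomputable def a2 (A : Matrix (Fin 2) (Fin 2) ℝ) : ℝ := |A.det| / a1 A

/-- product of the matrices along a finite word -/
noncomputable def wprod {κ : ℕ} (A : Fin κ → Matrix (Fin 2) (Fin 2) ℝ) (l : List (Fin κ)) :
    Matrix (Fin 2) (Fin 2) ℝ := (l.map A).prod

/-- the cone X(θ,β) -/
def cone (θ : E2) (β : ℝ) : Set E2 :=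
  {x | x ≠ 0 ∧ Real.cos (β / 2) * ‖x‖ < |(inner ℝ θ x : ℝ)|}

/-- unoriented angle between the lines spanned by two vectors -/
noncomputable def uangle (u v : E2) : ℝ :=
  Real.arccos (|(inner ℝ u v : ℝ)| / (‖u‖ * ‖v‖))

/-! Let `B = A_𝚒` and let `v` be a unit vector with `|B v| = ‖B‖`. Maximality of `v` makes it
an eigenvector of `S = BᵀB` for `‖B‖²`, whence `|B x| ≥ ‖B‖ |⟪v, x⟫|`. Products of matrices
sending `cl X(θ, β) \ {0}` into `X(θ, β)` do so again, so `S` sends the closed cone into the open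
one. In the basis of the two edges of the cone `S` is then a positive matrix, and a
Perron–Frobenius argument puts its top eigenvector `v` in `cl X(θ, β)`. Finally two lines in
`cl X(θ, β)` make an angle of at most `β`, so `|⟪v, x⟫| ≥ cos β |x|` for `x ∈ X(θ, β)`. -/
open scoped RealInnerProductSpace EuclideanSpace Topology

lemma eq_zero_of_forall_mul_le_sq_mul {a b : ℝ} (h : ∀ t : ℝ, t * a ≤ t ^ 2 * b) : a = 0 := by
  have hb : 0 < |b| + 1 := by positivity
  have ht := h (a / (|b| + 1))
  rw [div_pow, ← mul_div_right_comm, div_mul_eq_mul_div, div_le_div_iff₀ hb (by positivity)] at ht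
  have hba : a ^ 2 * b * (|b| + 1) ≤ a ^ 2 * |b| * (|b| + 1) := by gcongr; exact le_abs_self b
  have ha : a ^ 2 * (|b| + 1) ≤ 0 := by nlinarith
  exact pow_eq_zero_iff two_ne_zero |>.1 <|
    le_antisymm (nonpos_of_mul_nonpos_left (by linarith) hb) (sq_nonneg a)

lemma mul_le_mul_mul_of_sq_le {a b X Y k : ℝ} (ha : 0 ≤ a) (hb : 0 ≤ b) (hX : 0 ≤ X) (hY : 0 ≤ Y)
    (haX : a ^ 2 ≤ k * X ^ 2) (hbY : b ^ 2 ≤ k * Y ^ 2) : a * b ≤ k * (X * Y) := by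
  rcases (mul_nonneg hX hY).eq_or_lt with hXY | hXY
  · rcases mul_eq_zero.1 hXY.symm with rfl | rfl
    · obtain rfl : a = 0 :=
        pow_eq_zero_iff two_ne_zero |>.1 <| le_antisymm (by simpa using haX) (sq_nonneg a)
      simp
    · obtain rfl : b = 0 :=
        pow_eq_zero_iff two_ne_zero |>.1 <| le_antisymm (by simpa using hbY) (sq_nonneg b)
      simp
  · have hAMGM : 2 * (a * b) * (X * Y) ≤ a ^ 2 * Y ^ 2 + b ^ 2 * X ^ 2 := by
      nlinarith [sq_nonneg (a * Y - b * X)]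
    nlinarith [mul_le_mul_of_nonneg_right haX (sq_nonneg Y),
      mul_le_mul_of_nonneg_right hbY (sq_nonneg X)]

section InnerProductSpace

variable {F G : Type*} [NormedAddCommGroup F] [InnerProductSpace ℝ F]
  [NormedAddCommGroup G] [InnerProductSpace ℝ G]

lemma norm_sub_inner_smul_sq {θ : F} (hθ : ‖θ‖ = 1) (x : F) :
    ‖x - ⟪θ, x⟫ • θ‖ ^ 2 = ‖x‖ ^ 2 - ⟪θ, x⟫ ^ 2 := by
  rw [← real_inner_self_eq_norm_sq, ← real_inner_self_eq_norm_sq x]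
  simp only [inner_sub_left, inner_sub_right, real_inner_smul_left, real_inner_smul_right,
    real_inner_self_eq_norm_sq θ, hθ, real_inner_comm θ]
  ring

lemma two_mul_sq_sub_one_mul_le_abs_inner {θ x y : F} (hθ : ‖θ‖ = 1) {c : ℝ}
    (hx : c * ‖x‖ ≤ |⟪θ, x⟫|) (hy : c * ‖y‖ ≤ |⟪θ, y⟫|) (hc : 0 ≤ c) :
    (2 * c ^ 2 - 1) * (‖x‖ * ‖y‖) ≤ |⟪x, y⟫| := by
  set x' := x - ⟪θ, x⟫ • θ
  set y' := y - ⟪θ, y⟫ • θ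
  have hxy : ⟪x, y⟫ = ⟪θ, x⟫ * ⟪θ, y⟫ + ⟪x', y'⟫ := by
    simp only [x', y', inner_sub_left, inner_sub_right, real_inner_smul_left,
      real_inner_smul_right, real_inner_self_eq_norm_sq θ, hθ, real_inner_comm θ]
    ring
  have hx2 : c ^ 2 * ‖x‖ ^ 2 ≤ ⟪θ, x⟫ ^ 2 := by
    rw [← sq_abs ⟪θ, x⟫, ← mul_pow]; gcongr
  have hy2 : c ^ 2 * ‖y‖ ^ 2 ≤ ⟪θ, y⟫ ^ 2 := by
    rw [← sq_abs ⟪θ, y⟫, ← mul_pow]; gcongr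
  have hperp : ‖x'‖ * ‖y'‖ ≤ (1 - c ^ 2) * (‖x‖ * ‖y‖) := by
    refine mul_le_mul_mul_of_sq_le (norm_nonneg _) (norm_nonneg _) (norm_nonneg _)
      (norm_nonneg _) ?_ ?_
    · linarith [norm_sub_inner_smul_sq hθ x]
    · linarith [norm_sub_inner_smul_sq hθ y]
  have hpar : c ^ 2 * (‖x‖ * ‖y‖) ≤ |⟪θ, x⟫ * ⟪θ, y⟫| := by
    rw [abs_mul]
    calc c ^ 2 * (‖x‖ * ‖y‖) = (c * ‖x‖) * (c * ‖y‖) := by ring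
      _ ≤ |⟪θ, x⟫| * |⟪θ, y⟫| := by gcongr
  calc (2 * c ^ 2 - 1) * (‖x‖ * ‖y‖) ≤ |⟪θ, x⟫ * ⟪θ, y⟫| - ‖x'‖ * ‖y'‖ := by linarith
    _ ≤ |⟪θ, x⟫ * ⟪θ, y⟫| - |⟪x', y'⟫| := by gcongr; exact abs_real_inner_le_norm x' y'
    _ ≤ |⟪x, y⟫| := by
      rw [hxy, ← abs_neg ⟪x', y'⟫, ← sub_neg_eq_add]
      exact abs_sub_abs_le_abs_sub _ _

lemma ContinuousLinearMap.exists_norm_eq_one_norm_apply_eq_opNorm [FiniteDimensional ℝ F]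
    [Nontrivial F] (T : F →L[ℝ] G) : ∃ v, ‖v‖ = 1 ∧ ‖T v‖ = ‖T‖ := by
  obtain ⟨v, hv, hTv⟩ := ((isCompact_sphere (0 : F) 1).image (by fun_prop)).sSup_mem
    ((NormedSpace.sphere_nonempty.2 zero_le_one).image fun x => ‖T x‖)
  exact ⟨v, by simpa using hv, hTv.trans T.sSup_sphere_eq_norm⟩

lemma ContinuousLinearMap.inner_apply_apply_eq_of_norm_apply_eq_opNorm (T : F →L[ℝ] G) {v : F}
    (hv : ‖v‖ = 1) (hTv : ‖T v‖ = ‖T‖) (x : F) : ⟪T v, T x⟫ = ‖T‖ ^ 2 * ⟪v, x⟫ := by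
  -- first variation of `t ↦ ‖T‖² ‖v + t x‖² - ‖T (v + t x)‖² ≥ 0` at its zero `t = 0`
  refine sub_eq_zero.1 <|
    eq_zero_of_forall_mul_le_sq_mul (b := (‖T‖ ^ 2 * ‖x‖ ^ 2 - ‖T x‖ ^ 2) / 2) fun t => ?_
  have hle : ‖T (v + t • x)‖ ^ 2 ≤ (‖T‖ * ‖v + t • x‖) ^ 2 := by
    gcongr
    exact T.le_opNorm _
  rw [map_add, map_smul, mul_pow, ← real_inner_self_eq_norm_sq,
    ← real_inner_self_eq_norm_sq (v + t • x)] at hle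
  simp only [inner_add_left, inner_add_right, inner_smul_left, inner_smul_right,
    RCLike.conj_to_real, real_inner_comm (T v), real_inner_comm v, real_inner_self_eq_norm_sq, hTv,
    hv, one_pow] at hle
  nlinarith

lemma ContinuousLinearMap.norm_mul_abs_inner_le_norm_apply (T : F →L[ℝ] G) {v : F}
    (hv : ‖v‖ = 1) (hTv : ‖T v‖ = ‖T‖) (x : F) : ‖T‖ * |⟪v, x⟫| ≤ ‖T x‖ := by
  rcases (norm_nonneg T).eq_or_lt with hT | hT
  · rw [← hT, zero_mul]
    exact norm_nonneg _
  refine le_of_mul_le_mul_left ?_ hT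
  calc ‖T‖ * (‖T‖ * |⟪v, x⟫|) = |⟪T v, T x⟫| := by
        rw [T.inner_apply_apply_eq_of_norm_apply_eq_opNorm hv hTv, abs_mul,
          abs_of_nonneg (sq_nonneg ‖T‖)]
        ring
    _ ≤ ‖T v‖ * ‖T x‖ := abs_real_inner_le_norm _ _
    _ = ‖T‖ * ‖T x‖ := by rw [hTv]

end InnerProductSpace

namespace Orientation

variable {E : Type*} [NormedAddCommGroup E] [InnerProductSpace ℝ E]
  [Fact (Module.finrank ℝ E = 2)] (o : Orientation ℝ E (Fin 2)) {θ : E} {β : ℝ}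

lemma inner_smul_add_areaForm_smul_rightAngleRotation (hθ : ‖θ‖ = 1) (x : E) :
    ⟪θ, x⟫ • θ + o.areaForm θ x • o.rightAngleRotation θ = x := by
  refine ext_inner_left ℝ fun y => ?_
  have := o.inner_mul_inner_add_areaForm_mul_areaForm θ x y
  rw [hθ, one_pow, one_mul] at this
  rw [inner_add_right, real_inner_smul_right, real_inner_smul_right,
    inner_rightAngleRotation_right, o.areaForm_swap y θ, neg_neg, real_inner_comm θ y,
    real_inner_comm x y, ← this]

lemma inner_smul_add_smul_rightAngleRotation (hθ : ‖θ‖ = 1) (a b a' b' : ℝ) :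
    ⟪a • θ + b • o.rightAngleRotation θ, a' • θ + b' • o.rightAngleRotation θ⟫ =
      a * a' + b * b' := by
  simp [inner_add_left, inner_add_right, real_inner_smul_left, real_inner_smul_right, hθ]
  ring

/-- The edge of the double cone of axis `θ` and aperture `β` lying on the positive side of `θ`
for `o`; the other edge is `(-o).coneEdge θ β`. -/
def coneEdge (θ : E) (β : ℝ) : E := cos (β / 2) • θ + sin (β / 2) • o.rightAngleRotation θ

/-- `sin β` times the coordinate along `o.coneEdge θ β` in the basis of the two edges. -/
def coneCoord (θ : E) (β : ℝ) : E →ₗ[ℝ] ℝ :=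
  sin (β / 2) • innerₛₗ ℝ θ + cos (β / 2) • o.areaForm θ

lemma coneCoord_apply (x : E) :
    o.coneCoord θ β x = sin (β / 2) * ⟪θ, x⟫ + cos (β / 2) * o.areaForm θ x := rfl

lemma sin_smul_eq_coneCoord_smul_add_coneCoord_smul (hθ : ‖θ‖ = 1) (x : E) :
    sin β • x = o.coneCoord θ β x • o.coneEdge θ β + (-o).coneCoord θ β x • (-o).coneEdge θ β := by
  conv_lhs => rw [← o.inner_smul_add_areaForm_smul_rightAngleRotation hθ x]
  have hsin : sin β = 2 * sin (β / 2) * cos (β / 2) := by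
    rw [← sin_two_mul, mul_div_cancel₀ _ two_ne_zero]
  have hcs := sin_sq_add_cos_sq (β / 2)
  simp only [coneCoord_apply, coneEdge, areaForm_neg_orientation,
    rightAngleRotation_neg_orientation, LinearMap.neg_apply, hsin]
  module

lemma inner_sq_sub_cos_sq_mul_norm_sq (hθ : ‖θ‖ = 1) (x : E) :
    ⟪θ, x⟫ ^ 2 - cos (β / 2) ^ 2 * ‖x‖ ^ 2 = o.coneCoord θ β x * (-o).coneCoord θ β x := by
  have hx := o.inner_sq_add_areaForm_sq θ x
  rw [hθ, one_pow, one_mul] at hx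
  simp only [coneCoord_apply, areaForm_neg_orientation, LinearMap.neg_apply]
  linear_combination cos (β / 2) ^ 2 * hx - ⟪θ, x⟫ ^ 2 * sin_sq_add_cos_sq (β / 2)

lemma cos_half_mul_norm_lt_abs_inner_iff (hθ : ‖θ‖ = 1) (hc : 0 ≤ cos (β / 2)) (x : E) :
    cos (β / 2) * ‖x‖ < |⟪θ, x⟫| ↔ 0 < o.coneCoord θ β x * (-o).coneCoord θ β x := by
  rw [← o.inner_sq_sub_cos_sq_mul_norm_sq hθ, sub_pos, ← mul_pow, sq_lt_sq,
    abs_of_nonneg (by positivity : 0 ≤ cos (β / 2) * ‖x‖)]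

lemma cos_half_mul_norm_le_abs_inner_iff (hθ : ‖θ‖ = 1) (hc : 0 ≤ cos (β / 2)) (x : E) :
    cos (β / 2) * ‖x‖ ≤ |⟪θ, x⟫| ↔ 0 ≤ o.coneCoord θ β x * (-o).coneCoord θ β x := by
  rw [← o.inner_sq_sub_cos_sq_mul_norm_sq hθ, sub_nonneg, ← mul_pow, sq_le_sq,
    abs_of_nonneg (by positivity : 0 ≤ cos (β / 2) * ‖x‖)]

lemma inner_coneEdge (hθ : ‖θ‖ = 1) : ⟪θ, o.coneEdge θ β⟫ = cos (β / 2) := by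
  simpa [coneEdge] using
    o.inner_smul_add_smul_rightAngleRotation hθ 1 0 (cos (β / 2)) (sin (β / 2))

lemma norm_coneEdge (hθ : ‖θ‖ = 1) : ‖o.coneEdge θ β‖ = 1 := by
  rw [← sq_eq_sq₀ (norm_nonneg _) zero_le_one, ← real_inner_self_eq_norm_sq, coneEdge,
    inner_smul_add_smul_rightAngleRotation _ hθ]
  linear_combination cos_sq_add_sin_sq (β / 2)

lemma inner_coneEdge_neg (hθ : ‖θ‖ = 1) : ⟪o.coneEdge θ β, (-o).coneEdge θ β⟫ = cos β := by
  rw [coneEdge, coneEdge, rightAngleRotation_neg_orientation, smul_neg, ← neg_smul,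
    inner_smul_add_smul_rightAngleRotation _ hθ]
  conv_rhs => rw [← add_halves β, cos_add]
  ring

lemma sin_mul_inner_coneEdge (hθ : ‖θ‖ = 1) (y : E) :
    sin β * ⟪o.coneEdge θ β, y⟫ = o.coneCoord θ β y + cos β * (-o).coneCoord θ β y := by
  rw [← real_inner_smul_right, o.sin_smul_eq_coneCoord_smul_add_coneCoord_smul hθ,
    inner_add_right, real_inner_smul_right, real_inner_smul_right, real_inner_self_eq_norm_sq,
    o.norm_coneEdge hθ, o.inner_coneEdge_neg hθ]
  ring

end Orientation

section Cone

variable {θ : E2} {β : ℝ}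

lemma mem_closure_cone_of_cos_half_mul_norm_le_inner (hθ : ‖θ‖ = 1) (hc₀ : 0 ≤ cos (β / 2))
    (hc₁ : cos (β / 2) < 1) {x : E2} (hx : cos (β / 2) * ‖x‖ ≤ ⟪θ, x⟫) :
    x ∈ closure (cone θ β) := by
  have hmem : ∀ t : ℝ, 0 < t → x + t • θ ∈ cone θ β := by
    intro t ht
    have hlt : cos (β / 2) * ‖x + t • θ‖ < |⟪θ, x + t • θ⟫| :=
      calc cos (β / 2) * ‖x + t • θ‖ ≤ cos (β / 2) * (‖x‖ + t) := by
            gcongr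
            simpa [norm_smul, hθ, abs_of_pos ht] using norm_add_le x (t • θ)
        _ < ⟪θ, x⟫ + t := by nlinarith
        _ = ⟪θ, x + t • θ⟫ := by
            rw [inner_add_right, real_inner_smul_right, real_inner_self_eq_norm_sq, hθ]; ring
        _ ≤ |⟪θ, x + t • θ⟫| := le_abs_self _
    refine ⟨fun h => ?_, hlt⟩
    simp [h] at hlt
  have hlim : Tendsto (fun t : ℝ => x + t • θ) (𝓝[>] 0) (𝓝 x) := by
    have : Continuous fun t : ℝ => x + t • θ := by fun_prop
    simpa using (this.tendsto 0).mono_left nhdsWithin_le_nhds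
  exact mem_closure_of_tendsto hlim (eventually_nhdsWithin_of_forall hmem)

lemma Orientation.coneEdge_mem_closure_cone (o : Orientation ℝ E2 (Fin 2)) (hθ : ‖θ‖ = 1)
    (hβ : 0 < β) (hβ' : β ≤ π) : o.coneEdge θ β ∈ closure (cone θ β) := by
  have hc₀ : 0 ≤ cos (β / 2) := cos_nonneg_of_neg_pi_div_two_le_of_le (by linarith) (by linarith)
  have hc₁ : cos (β / 2) < 1 := by
    simpa using cos_lt_cos_of_nonneg_of_le_pi le_rfl (by linarith) (by linarith : 0 < β / 2)
  refine mem_closure_cone_of_cos_half_mul_norm_le_inner hθ hc₀ hc₁ ?_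
  rw [o.norm_coneEdge hθ, o.inner_coneEdge hθ, mul_one]

lemma Orientation.coneCoord_neg_pos_of_mem_cone (o : Orientation ℝ E2 (Fin 2)) (hθ : ‖θ‖ = 1)
    (hβ : 0 < β) (hβ' : β ≤ π / 2) {y : E2} (hy : y ∈ cone θ β)
    (hy' : 0 ≤ ⟪o.coneEdge θ β, y⟫) : 0 < (-o).coneCoord θ β y := by
  have hc : 0 ≤ cos (β / 2) := cos_nonneg_of_neg_pi_div_two_le_of_le (by linarith) (by linarith)
  have hprod := (o.cos_half_mul_norm_lt_abs_inner_iff hθ hc y).1 hy.2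
  have hsum : 0 ≤ o.coneCoord θ β y + cos β * (-o).coneCoord θ β y := by
    rw [← o.sin_mul_inner_coneEdge hθ]
    exact mul_nonneg (sin_nonneg_of_nonneg_of_le_pi hβ.le (by linarith)) hy'
  by_contra! h
  have hneg := neg_of_mul_pos_left hprod h
  nlinarith [mul_nonpos_of_nonneg_of_nonpos
    (cos_nonneg_of_neg_pi_div_two_le_of_le (by linarith) hβ') h]

/-- Perron–Frobenius in the plane. In the basis of the two edges `S` has positive entries (being
positive semidefinite, it cannot send an edge into the opposite nappe). If the edge coordinates of
`v` had opposite signs, the first row of `S v = μ v` would push the Rayleigh quotient of `S` at an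
edge above its maximum `μ`. -/
theorem cos_half_mul_norm_le_abs_inner_of_apply_eq_smul {v : E2} {μ : ℝ} (hθ : ‖θ‖ = 1)
    (hβ : 0 < β) (hβ' : β < π / 2) (S : E2 →ₗ[ℝ] E2)
    (hS : ∀ x ∈ closure (cone θ β), x ≠ 0 → S x ∈ cone θ β)
    (hpos : ∀ x, 0 ≤ ⟪x, S x⟫) (hmax : ∀ x, ⟪x, S x⟫ ≤ μ * ‖x‖ ^ 2) (hv : S v = μ • v) :
    cos (β / 2) * ‖v‖ ≤ |⟪θ, v⟫| := by
  let o : Orientation ℝ E2 (Fin 2) := (EuclideanSpace.basisFun (Fin 2) ℝ).toBasis.orientation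
  have hc : 0 ≤ cos (β / 2) := cos_nonneg_of_neg_pi_div_two_le_of_le (by linarith) (by linarith)
  have hsin : 0 < sin β := sin_pos_of_pos_of_lt_pi hβ (by linarith)
  have hcos : 0 < cos β := cos_pos_of_mem_Ioo ⟨by linarith, hβ'⟩
  have hedge (o' : Orientation ℝ E2 (Fin 2)) : S (o'.coneEdge θ β) ∈ cone θ β :=
    hS _ (o'.coneEdge_mem_closure_cone hθ hβ (by linarith))
      (norm_ne_zero_iff.1 (by rw [o'.norm_coneEdge hθ]; exact one_ne_zero))
  set f := o.coneCoord θ β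
  set f' := (-o).coneCoord θ β
  set u := o.coneEdge θ β
  set u' := (-o).coneEdge θ β
  rw [o.cos_half_mul_norm_le_abs_inner_iff hθ hc]
  by_contra! hv'
  have h₁ : 0 < f' (S u) := o.coneCoord_neg_pos_of_mem_cone hθ hβ hβ'.le (hedge o) (hpos u)
  have h₂ : 0 < f (S u') := by
    have := (-o).coneCoord_neg_pos_of_mem_cone hθ hβ hβ'.le (hedge (-o)) (hpos u')
    rwa [neg_neg o] at this
  have hray : f (S u) + cos β * f' (S u) ≤ sin β * μ := by
    rw [← o.sin_mul_inner_coneEdge hθ]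
    have := hmax u
    rw [o.norm_coneEdge hθ, one_pow, mul_one] at this
    exact mul_le_mul_of_nonneg_left this hsin.le
  have heig : sin β * μ * f v = f v * f (S u) + f' v * f (S u') := by
    have := congrArg (fun x => f (S x))
      (o.sin_smul_eq_coneCoord_smul_add_coneCoord_smul (β := β) hθ v)
    simp only [map_add, map_smul, hv, smul_eq_mul] at this
    linear_combination this
  have hfac : (sin β * μ - f (S u)) * (f v * f' v) = f' v ^ 2 * f (S u') := by
    linear_combination f' v * heig
  have hle : sin β * μ - f (S u) ≤ 0 :=
    nonpos_of_mul_nonneg_left (hfac ▸ by positivity) hv'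
  nlinarith

end Cone

def StrictlyPreservesCone (θ : E2) (β : ℝ) (M : Matrix (Fin 2) (Fin 2) ℝ) : Prop :=
  ∀ x ∈ closure (cone θ β), x ≠ 0 → toEuclideanLin M x ∈ cone θ β

namespace StrictlyPreservesCone

variable {θ : E2} {β : ℝ} {M N : Matrix (Fin 2) (Fin 2) ℝ}

lemma mul (hM : StrictlyPreservesCone θ β M) (hN : StrictlyPreservesCone θ β N) :
    StrictlyPreservesCone θ β (M * N) := fun x hx hx₀ => by
  have hNx := hN x hx hx₀
  rw [toLpLin_mul_same, LinearMap.comp_apply]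
  exact hM _ (subset_closure hNx) hNx.1

lemma list_prod {l : List (Matrix (Fin 2) (Fin 2) ℝ)} (hl : l ≠ [])
    (h : ∀ M ∈ l, StrictlyPreservesCone θ β M) : StrictlyPreservesCone θ β l.prod := by
  induction l with
  | nil => exact absurd rfl hl
  | cons M l ih =>
    rw [List.prod_cons]
    rcases eq_or_ne l [] with rfl | hl'
    · simpa using h M List.mem_cons_self
    · exact (h M List.mem_cons_self).mul (ih hl' fun N hN => h N (List.mem_cons_of_mem M hN))

end StrictlyPreservesCone

lemma inner_toEuclideanLin_transpose {m n : Type*} [Fintype m] [Fintype n] [DecidableEq m]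
    [DecidableEq n] (B : Matrix m n ℝ) (x : EuclideanSpace ℝ n) (y : EuclideanSpace ℝ m) :
    ⟪x, toEuclideanLin Bᵀ y⟫ = ⟪toEuclideanLin B x, y⟫ := by
  rw [← conjTranspose_eq_transpose_of_trivial, toEuclideanLin_conjTranspose_eq_adjoint,
    LinearMap.adjoint_inner_right]

theorem StrictlyPreservesCone.cos_half_mul_norm_le_abs_inner {θ v : E2} {β : ℝ}
    {B : Matrix (Fin 2) (Fin 2) ℝ} (hB : StrictlyPreservesCone θ β B)
    (hBt : StrictlyPreservesCone θ β Bᵀ) (hθ : ‖θ‖ = 1) (hβ : 0 < β) (hβ' : β < π / 2)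
    (hv : ‖v‖ = 1) (hBv : ‖mLin B v‖ = a1 B) : cos (β / 2) * ‖v‖ ≤ |⟪θ, v⟫| := by
  have hS (x y : E2) : ⟪x, toEuclideanLin (Bᵀ * B) y⟫ = ⟪mLin B x, mLin B y⟫ := by
    rw [toLpLin_mul_same, LinearMap.comp_apply, inner_toEuclideanLin_transpose]
    rfl
  refine cos_half_mul_norm_le_abs_inner_of_apply_eq_smul (μ := a1 B ^ 2) hθ hβ hβ'
    (toEuclideanLin (Bᵀ * B)) (hBt.mul hB) (fun x => ?_) (fun x => ?_) ?_
  · rw [hS]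
    exact real_inner_self_nonneg
  · rw [hS, real_inner_self_eq_norm_sq, ← mul_pow]
    gcongr
    exact (mLin B).le_opNorm x
  · refine ext_inner_left ℝ fun y => ?_
    rw [hS, real_inner_comm, (mLin B).inner_apply_apply_eq_of_norm_apply_eq_opNorm hv hBv,
      real_inner_smul_right, real_inner_comm]
    rfl

theorem norm_lower_bound_on_cone_general (κ : ℕ)
    (A : Fin κ → Matrix (Fin 2) (Fin 2) ℝ)
    (θ : E2) (hθ : ‖θ‖ = 1) (β : ℝ) (hβ : 0 < β) (hβ' : β < π / 2)
    (hK1a : ∀ i, ∀ x ∈ closure (cone θ β), x ≠ 0 → Matrix.toEuclideanLin (A i) x ∈ cone θ β)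
    (hK1b : ∀ i, ∀ x ∈ closure (cone θ β), x ≠ 0 → Matrix.toEuclideanLin (A i)ᵀ x ∈ cone θ β) :
    ∀ li : List (Fin κ), li ≠ [] → ∀ x ∈ cone θ β,
      Real.cos β * a1 (wprod A li) * ‖x‖ ≤ ‖Matrix.toEuclideanLin (wprod A li) x‖ := by
  intro li hli x hx
  have hB : StrictlyPreservesCone θ β (wprod A li) :=
    .list_prod (by simpa [wprod] using hli) fun M hM => by
      obtain ⟨i, -, rfl⟩ := List.mem_map.1 hM
      exact hK1a i
  have hBt : StrictlyPreservesCone θ β (wprod A li)ᵀ := by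
    rw [wprod, transpose_list_prod]
    exact .list_prod (by simpa using hli) fun M hM => by
      obtain ⟨i, -, rfl⟩ := by simpa using hM
      exact hK1b i
  obtain ⟨v, hv, hBv⟩ := (mLin (wprod A li)).exists_norm_eq_one_norm_apply_eq_opNorm
  have hangle := two_mul_sq_sub_one_mul_le_abs_inner hθ
    (hB.cos_half_mul_norm_le_abs_inner hBt hθ hβ hβ' hv hBv) hx.2.le
    (cos_nonneg_of_neg_pi_div_two_le_of_le (by linarith) (by linarith))
  rw [← cos_two_mul, mul_div_cancel₀ β two_ne_zero, hv, one_mul] at hangle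
  calc cos β * a1 (wprod A li) * ‖x‖ = a1 (wprod A li) * (cos β * ‖x‖) := by ring
    _ ≤ a1 (wprod A li) * |⟪v, x⟫| := by gcongr; exact norm_nonneg _
    _ ≤ ‖mLin (wprod A li) x‖ := (mLin _).norm_mul_abs_inner_le_norm_apply hv hBv x

/-- Lemma 4.1 (first part): under (K1a) and (K1b), `|A_li x| ≥ cos(β) α₁(A_li) |x|`
for all `x ∈ X(θ,β)` and all finite words `li`. -/
theorem norm_lower_bound_on_cone (κ : ℕ) (hκ : 2 ≤ κ)
    (A : Fin κ → Matrix (Fin 2) (Fin 2) ℝ)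
    (hinv : ∀ i, IsUnit (A i).det) (hnorm : ∀ i, a1 (A i) < 1)
    (θ : E2) (hθ : ‖θ‖ = 1) (β : ℝ) (hβ : 0 < β) (hβ' : β < π / 2)
    (hK1a : ∀ i, ∀ x ∈ closure (cone θ β), x ≠ 0 → Matrix.toEuclideanLin (A i) x ∈ cone θ β)
    (hK1b : ∀ i, ∀ x ∈ closure (cone θ β), x ≠ 0 → Matrix.toEuclideanLin (A i)ᵀ x ∈ cone θ β) :
    ∀ li : List (Fin κ), li ≠ [] → ∀ x ∈ cone θ β,
      Real.cos β * a1 (wprod A li) * ‖x‖ ≤ ‖Matrix.toEuclideanLin (wprod A li) x‖ :=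
  norm_lower_bound_on_cone_general κ A θ hθ β hβ hβ' hK1a hK1b

end
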